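/- Let T > 0 and 0 < ε ≤ δ/2 be real numbers, let d ≥ 1 be a natural number, and for each natural number m set P(m) = T^{m+1}·(1/(T+δ−ε)^{m+1} − 1/(T+δ+ε)^{m+1}) and Q(m, d) = Q_{P(m)}(m, d). Then lim_{m→∞} Q(m, d) = 0, i.e., the sequence m ↦ Q(m, d) tends to 0. -/

import Mathlib

/-!
Since `P(m) ≤ r ^ m` with `r = T / (T + δ - ε) < 1`, it suffices to bound the tail by the union
bound `Q_p(m, d) ≤ Q_p(m, 1) = 1 - (1 - p) ^ (m - 1) ≤ m p` (Bernoulli's inequality) and to use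
`m r ^ m → 0`.
-/

/-- The binomial upper-tail probability `Q_p(m,d) = Σ_{l=d}^{m-1} C(m-1,l) p^l (1-p)^{m-1-l}`. -/
noncomputable def Qtail (p : ℝ) (m d : ℕ) : ℝ :=
  ∑ l ∈ Finset.Ico d m, (Nat.choose (m - 1) l : ℝ) * p ^ l * (1 - p) ^ (m - 1 - l)

open Filter Finset

section Qtail

variable {p : ℝ}

lemma Qtail_nonneg (hp₀ : 0 ≤ p) (hp₁ : p ≤ 1) (m d : ℕ) : 0 ≤ Qtail p m d :=
  sum_nonneg fun l _ => by have : 0 ≤ 1 - p := sub_nonneg.mpr hp₁; positivity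

lemma Qtail_antitone (hp₀ : 0 ≤ p) (hp₁ : p ≤ 1) (m : ℕ) {d d' : ℕ} (hdd' : d ≤ d') :
    Qtail p m d' ≤ Qtail p m d :=
  sum_le_sum_of_subset_of_nonneg (Ico_subset_Ico_left hdd') fun l _ _ => by
    have : 0 ≤ 1 - p := sub_nonneg.mpr hp₁; positivity

lemma Qtail_one (p : ℝ) (m : ℕ) : Qtail p m 1 = 1 - (1 - p) ^ (m - 1) := by
  cases m with
  | zero => simp [Qtail]
  | succ k =>
    have hbinom := add_pow p (1 - p) k
    rw [add_sub_cancel, one_pow, range_eq_Ico, sum_eq_sum_Ico_succ_bot k.succ_pos] at hbinom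
    simp only [pow_zero, Nat.sub_zero, Nat.choose_zero_right, Nat.cast_one, one_mul, mul_one,
      zero_add] at hbinom
    have hterms : Qtail p (k + 1) 1 =
        ∑ l ∈ Ico 1 (k + 1), p ^ l * (1 - p) ^ (k - l) * (k.choose l : ℝ) :=
      sum_congr rfl fun l _ => by rw [Nat.add_sub_cancel]; ring
    rw [hterms, Nat.add_sub_cancel]
    linarith

lemma Qtail_le_mul (hp₀ : 0 ≤ p) (hp₁ : p ≤ 1) (m : ℕ) {d : ℕ} (hd : 1 ≤ d) :
    Qtail p m d ≤ m * p := by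
  have hbernoulli := one_add_mul_le_pow (a := -p) (by linarith) (m - 1)
  calc Qtail p m d ≤ Qtail p m 1 := Qtail_antitone hp₀ hp₁ m hd
    _ = 1 - (1 - p) ^ (m - 1) := Qtail_one p m
    _ ≤ ((m - 1 : ℕ) : ℝ) * p := by rw [← sub_eq_add_neg] at hbernoulli; linarith
    _ ≤ m * p := mul_le_mul_of_nonneg_right (by exact_mod_cast m.sub_le 1) hp₀

end Qtail

section InvPowDiff

variable {T a b : ℝ}

lemma mul_one_div_pow_sub_nonneg (hT : 0 ≤ T) (ha : 0 < a) (hab : a ≤ b) (n : ℕ) :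
    0 ≤ T ^ n * (1 / a ^ n - 1 / b ^ n) := by
  have : 1 / b ^ n ≤ 1 / a ^ n :=
    one_div_le_one_div_of_le (pow_pos ha n) (pow_le_pow_left₀ ha.le hab n)
  exact mul_nonneg (pow_nonneg hT n) (sub_nonneg.mpr this)

lemma mul_one_div_pow_sub_le (ha : 0 < a) (hab : a ≤ b) (hT : 0 ≤ T) (n : ℕ) :
    T ^ n * (1 / a ^ n - 1 / b ^ n) ≤ (T / a) ^ n := by
  have : 0 ≤ 1 / b ^ n := by have := ha.trans_le hab; positivity
  calc T ^ n * (1 / a ^ n - 1 / b ^ n) ≤ T ^ n * (1 / a ^ n) :=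
        mul_le_mul_of_nonneg_left (by linarith) (pow_nonneg hT n)
    _ = (T / a) ^ n := by rw [div_pow, mul_one_div]

end InvPowDiff

/-- For `T > 0`, `0 < ε ≤ δ/2`, `d ≥ 1`, and
`P(m) = T^{m+1}(1/(T+δ-ε)^{m+1} - 1/(T+δ+ε)^{m+1})`, the sequence
`m ↦ Q_{P(m)}(m,d)` tends to `0` as `m → ∞`. -/
theorem Qtail_tendsto_zero (T ε δ : ℝ) (hT : 0 < T) (hε : 0 < ε) (hεδ : ε ≤ δ / 2)
    (d : ℕ) (hd : 1 ≤ d)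
    (P : ℕ → ℝ)
    (hP : ∀ m : ℕ,
      P m = T ^ (m + 1) * (1 / (T + δ - ε) ^ (m + 1) - 1 / (T + δ + ε) ^ (m + 1))) :
    Filter.Tendsto (fun m : ℕ => Qtail (P m) m d) Filter.atTop (nhds 0) := by
  have hTA : T < T + δ - ε := by linarith
  have hA : 0 < T + δ - ε := hT.trans hTA
  have hAB : T + δ - ε ≤ T + δ + ε := by linarith
  set r := T / (T + δ - ε)
  have hr₀ : 0 ≤ r := div_nonneg hT.le hA.le
  have hr₁ : r < 1 := (div_lt_one hA).mpr hTA
  have hP₀ (m : ℕ) : 0 ≤ P m := hP m ▸ mul_one_div_pow_sub_nonneg hT.le hA hAB _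
  have hP_le (m : ℕ) : P m ≤ r ^ m :=
    (hP m ▸ mul_one_div_pow_sub_le hA hAB hT.le _).trans
      (pow_le_pow_of_le_one hr₀ hr₁.le m.le_succ)
  have hP₁ (m : ℕ) : P m ≤ 1 := (hP_le m).trans (pow_le_one₀ hr₀ hr₁.le)
  refine squeeze_zero (fun m => Qtail_nonneg (hP₀ m) (hP₁ m) m d) (fun m => ?_)
    (tendsto_self_mul_const_pow_of_lt_one hr₀ hr₁)
  exact (Qtail_le_mul (hP₀ m) (hP₁ m) m hd).trans
    (mul_le_mul_of_nonneg_left (hP_le m) m.cast_nonneg)
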